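/- Assume M₁ is 3-order-rigid and f : M₁ ≃o M₂ is an order isomorphism. Then for all nonstandard a, b ∈ M₁: a E³ b in M₁ iff f a E³ f b in M₂, and a E⁴ b in M₁ iff f a E⁴ f b in M₂. -/

import Mathlib

/-- `a` is a nonstandard element: above every natural number cast. -/
def Nonstd {M : Type*} [CommSemiring M] [LinearOrder M] [IsStrictOrderedRing M] (a : M) : Prop :=
  ∀ n : ℕ, (n : M) < a

def E0 {M : Type*} [CommSemiring M] [LinearOrder M] [IsStrictOrderedRing M] (a b : M) : Prop :=
  ∃ n : ℕ, a < b + (n : M) ∧ b < a + (n : M)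

def E1 {M : Type*} [CommSemiring M] [LinearOrder M] [IsStrictOrderedRing M] (a b : M) : Prop :=
  ∃ c : M, (∀ n : ℕ, (n : M) * c < a ∧ (n : M) * c < b) ∧ a < b + c ∧ b < a + c

def E2 {M : Type*} [CommSemiring M] [LinearOrder M] [IsStrictOrderedRing M] (a b : M) : Prop :=
  ∃ n : ℕ, a < (n : M) * b ∧ b < (n : M) * a

def E3 {M : Type*} [CommSemiring M] [LinearOrder M] [IsStrictOrderedRing M] (a b : M) : Prop :=
  ∃ c : M, (∀ n : ℕ, c ^ n < a ∧ c ^ n < b) ∧ a < b * c ∧ b < a * c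

def E4 {M : Type*} [CommSemiring M] [LinearOrder M] [IsStrictOrderedRing M] (a b : M) : Prop :=
  ∃ n : ℕ, a < b ^ n ∧ b < a ^ n

/-- `a E⁵ b`: some order automorphism of `M` maps `a` to `b`. -/
def E5 {M : Type*} [CommSemiring M] [LinearOrder M] [IsStrictOrderedRing M] (a b : M) : Prop :=
  ∃ f : M ≃o M, f a = b

/-- `E` is a convex equivalence relation on the nonstandard elements of `M`. -/
def IsConvexEquiv {M : Type*} [CommSemiring M] [LinearOrder M] [IsStrictOrderedRing M] (E : M → M → Prop) : Prop :=
  (∀ a : M, Nonstd a → E a a) ∧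
  (∀ a b : M, Nonstd a → Nonstd b → E a b → E b a) ∧
  (∀ a b c : M, Nonstd a → Nonstd b → Nonstd c → E a b → E b c → E a c) ∧
  (∀ a b c : M, Nonstd a → Nonstd b → Nonstd c → a ≤ b → b ≤ c → E a c → E a b)

/-- An almost `{<,+}`-isomorphism: an order isomorphism whose additivity error is finite. -/
def IsAlmostAddIso {M₁ M₂ : Type*} [CommSemiring M₁] [LinearOrder M₁] [IsStrictOrderedRing M₁]
    [CommSemiring M₂] [LinearOrder M₂] [IsStrictOrderedRing M₂] (f : M₁ ≃o M₂) : Prop :=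
  ∀ a b : M₁, ∃ n : ℕ, f (a + b) < f a + f b + (n : M₂) ∧ f a + f b < f (a + b) + (n : M₂)

/-- `M` is 2-order-rigid. -/
def OrderRigid2 (M : Type*) [CommSemiring M] [LinearOrder M] [IsStrictOrderedRing M] : Prop :=
  ∀ a b : M, Nonstd a → Nonstd b →
    Nonempty ({x : M // x < a} ≃o {x : M // x < b}) → E2 a b

/-- `M` is 3-order-rigid. -/
def OrderRigid3 (M : Type*) [CommSemiring M] [LinearOrder M] [IsStrictOrderedRing M] : Prop :=
  ∀ a b : M, Nonstd a → Nonstd b →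
    Nonempty ({x : M // x < a} ≃o {x : M // x < b}) → E3 a b

/-- `M` is 4-order-rigid. -/
def OrderRigid4 (M : Type*) [CommSemiring M] [LinearOrder M] [IsStrictOrderedRing M] : Prop :=
  ∀ a b : M, Nonstd a → Nonstd b →
    Nonempty ({x : M // x < a} ≃o {x : M // x < b}) → E4 a b

/-!
Dividing by `u` identifies the initial segment below `u * v` with the lexicographic product of
the segments below `v` and `u`, so the order type of `{z // z < u * v}` depends only on those of
`{z // z < u}` and `{z // z < v}`. Hence for an order isomorphism `f : M₁ ≃o M₂` the segments
below `s * t` and below `f s * f t` have the same order type, and 3-order-rigidity of `M₁` gives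
`s * t E³ f⁻¹ (f s * f t)`; in particular `c ^ n E³ f⁻¹ (f c ^ n)`. From this, `f` preserves and
reflects the relation "every power of `c` lies below `a`", in terms of which `E⁴` is expressed.
For `a ≤ b`, `a E³ b` says that `b < a * c` for some `c` all of whose powers lie below `a`;
dividing `f b` by `f a` (resp. `b` by `a`) and comparing the quotient through the products above
shows that this too is preserved and reflected.
-/

def SegEquiv {α β : Type*} [Preorder α] [Preorder β] (a : α) (b : β) : Prop :=
  Nonempty ({x : α // x < a} ≃o {y : β // y < b})

section SegEquiv

variable {α β γ : Type*} [Preorder α] [Preorder β] [Preorder γ]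

theorem SegEquiv.symm {a : α} {b : β} (h : SegEquiv a b) : SegEquiv b a :=
  h.map OrderIso.symm

theorem SegEquiv.trans {a : α} {b : β} {c : γ} (h : SegEquiv a b) (h' : SegEquiv b c) :
    SegEquiv a c :=
  let ⟨e⟩ := h
  let ⟨e'⟩ := h'
  ⟨e.trans e'⟩

theorem OrderIso.segEquiv (f : α ≃o β) (a : α) : SegEquiv a (f a) :=
  ⟨{ toEquiv := f.toEquiv.subtypeEquiv fun _ => f.lt_iff_lt.symm
     map_rel_iff' := f.le_iff_le }⟩

end SegEquiv

theorem add_one_le_of_lt_of_discrete {α : Type*} [LinearOrder α] [Add α] [One α]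
    (hd : ∀ a x : α, ¬(a < x ∧ x < a + 1)) {x y : α} (h : x < y) : x + 1 ≤ y :=
  not_lt.mp fun h' => hd x y ⟨h, h'⟩

theorem one_le_of_pos_of_discrete {α : Type*} [LinearOrder α] [AddZeroClass α] [One α]
    (hd : ∀ a x : α, ¬(a < x ∧ x < a + 1)) {x : α} (h : 0 < x) : 1 ≤ x := by
  simpa using add_one_le_of_lt_of_discrete hd h

theorem eq_zero_of_lt_one_of_discrete {α : Type*} [LinearOrder α] [AddZeroClass α] [One α]
    (h0 : ∀ x : α, 0 ≤ x) (hd : ∀ a x : α, ¬(a < x ∧ x < a + 1)) {x : α} (h : x < 1) :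
    x = 0 :=
  ((h0 x).lt_or_eq.resolve_left fun hx => (one_le_of_pos_of_discrete hd hx).not_gt h).symm

def PowSmall {M : Type*} [Monoid M] [LT M] (c a : M) : Prop := ∀ n : ℕ, c ^ n < a

theorem PowSmall.lt {M : Type*} [Monoid M] [LT M] {c a : M} (h : PowSmall c a) : c < a := by
  simpa using h 1

theorem PowSmall.max {M : Type*} [Monoid M] [LinearOrder M] {p q a : M} (hp : PowSmall p a)
    (hq : PowSmall q a) : PowSmall (max p q) a := by
  rcases max_choice p q with h | h <;> rw [h]
  exacts [hp, hq]

structure IsDiscreteDivSemiring (M : Type*) [CommSemiring M] [LinearOrder M]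
    [IsStrictOrderedRing M] : Prop where
  zero_le : ∀ x : M, 0 ≤ x
  discrete : ∀ a x : M, ¬(a < x ∧ x < a + 1)
  exists_div : ∀ a b : M, b ≠ 0 → ∃ q r : M, a = b * q + r ∧ r < b

section Semiring

variable {M : Type*} [CommSemiring M] [LinearOrder M] [IsStrictOrderedRing M]

theorem exists_eq_natCast_of_lt_natCast (h0 : ∀ x : M, 0 ≤ x)
    (hd : ∀ a x : M, ¬(a < x ∧ x < a + 1)) {n : ℕ} {y : M} (h : y < n) :
    ∃ k < n, y = k := by
  induction n with
  | zero => exact absurd h (by simpa using h0 y)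
  | succ n ih =>
    rcases lt_or_ge y n with hy | hy
    · obtain ⟨k, hk, rfl⟩ := ih hy
      exact ⟨k, by omega, rfl⟩
    · refine ⟨n, n.lt_succ_self, (hy.eq_of_not_lt fun hny => hd n y ⟨hny, ?_⟩).symm⟩
      exact_mod_cast h

theorem exists_eq_natCast_of_not_nonstd (h0 : ∀ x : M, 0 ≤ x)
    (hd : ∀ a x : M, ¬(a < x ∧ x < a + 1)) {x : M} (hx : ¬Nonstd x) : ∃ k : ℕ, x = k := by
  obtain ⟨n, hn⟩ := not_forall.mp hx
  obtain ⟨k, -, hk⟩ := exists_eq_natCast_of_lt_natCast h0 hd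
    ((not_lt.mp hn).trans_lt (Nat.cast_lt.mpr n.lt_succ_self))
  exact ⟨k, hk⟩

theorem Nonstd.pos {a : M} (ha : Nonstd a) : 0 < a := by
  simpa using ha 0

theorem Nonstd.one_lt {a : M} (ha : Nonstd a) : 1 < a := by
  simpa using ha 1

theorem Nonstd.mono {a b : M} (ha : Nonstd a) (hab : a ≤ b) : Nonstd b :=
  fun n => (ha n).trans_le hab

theorem Nonstd.infinite_Iio {a : M} (ha : Nonstd a) : (Set.Iio a).Infinite :=
  (Set.infinite_range_of_injective Nat.cast_injective).mono <| by
    rintro _ ⟨n, rfl⟩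
    exact ha n

theorem nonstd_of_infinite_Iio (h0 : ∀ x : M, 0 ≤ x) (hd : ∀ a x : M, ¬(a < x ∧ x < a + 1))
    {a : M} (ha : (Set.Iio a).Infinite) : Nonstd a := by
  by_contra hns
  obtain ⟨n, hn⟩ := not_forall.mp hns
  refine ha (((Set.finite_Iio n).image ((↑) : ℕ → M)).subset fun x hx => ?_)
  obtain ⟨k, hk, rfl⟩ := exists_eq_natCast_of_lt_natCast h0 hd (hx.out.trans_le (not_lt.mp hn))
  exact ⟨k, hk, rfl⟩

noncomputable def IsDiscreteDivSemiring.mulSegOrderIso (hM : IsDiscreteDivSemiring M) (u v : M)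
    (hu : u ≠ 0) : {q : M // q < v} ×ₗ {r : M // r < u} ≃o {z : M // z < u * v} := by
  have hlt : ∀ {q q' r : M}, q < q' → r < u → u * q + r < u * q' := fun hq hr =>
    calc _ < u * _ + u := add_lt_add_right hr _
      _ = u * (_ + 1) := by ring
      _ ≤ _ := mul_le_mul_of_nonneg_left (add_one_le_of_lt_of_discrete hM.discrete hq)
        (hM.zero_le u)
  refine StrictMono.orderIsoOfSurjective
    (fun p => ⟨u * (ofLex p).1.1 + (ofLex p).2.1, hlt (ofLex p).1.2 (ofLex p).2.2⟩) ?_ ?_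
  · rintro ⟨⟨q, hq⟩, ⟨r, hr⟩⟩ ⟨⟨q', hq'⟩, ⟨r', hr'⟩⟩ h
    rcases Prod.Lex.lt_iff.mp h with h | ⟨h, h'⟩
    · exact (hlt (show q < q' from h) hr).trans_le (le_add_of_nonneg_right (hM.zero_le r'))
    · cases congrArg Subtype.val h
      exact Subtype.mk_lt_mk.mpr (add_lt_add_right (show r < r' from h') _)
  · rintro ⟨z, hz⟩
    obtain ⟨q, r, rfl, hr⟩ := hM.exists_div z u hu
    refine ⟨toLex (⟨q, lt_of_not_ge fun hvq => hz.not_ge ?_⟩, ⟨r, hr⟩), rfl⟩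
    exact (mul_le_mul_of_nonneg_left hvq (hM.zero_le u)).trans
      (le_add_of_nonneg_right (hM.zero_le r))

abbrev uniqueLtOneOfDiscrete (h0 : ∀ x : M, 0 ≤ x) (hd : ∀ a x : M, ¬(a < x ∧ x < a + 1)) :
    Unique {x : M // x < 1} :=
  ⟨⟨⟨0, zero_lt_one⟩⟩, fun x => Subtype.ext (eq_zero_of_lt_one_of_discrete h0 hd x.2)⟩

theorem segEquiv_one {M' : Type*} [CommSemiring M'] [LinearOrder M'] [IsStrictOrderedRing M']
    (h0 : ∀ x : M, 0 ≤ x) (hd : ∀ a x : M, ¬(a < x ∧ x < a + 1))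
    (h0' : ∀ x : M', 0 ≤ x) (hd' : ∀ a x : M', ¬(a < x ∧ x < a + 1)) :
    SegEquiv (1 : M) (1 : M') :=
  letI := uniqueLtOneOfDiscrete h0 hd
  letI := uniqueLtOneOfDiscrete h0' hd'
  ⟨OrderIso.ofUnique _ _⟩

theorem PowSmall.mono_left (h0 : ∀ x : M, 0 ≤ x) {c d a : M} (h : PowSmall c a)
    (hdc : d ≤ c) : PowSmall d a :=
  fun n => (pow_le_pow_left₀ (h0 d) hdc n).trans_lt (h n)

theorem PowSmall.mul (h0 : ∀ x : M, 0 ≤ x) {p q a : M} (hp : PowSmall p a) (hq : PowSmall q a) :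
    PowSmall (p * q) a := fun n =>
  calc (p * q) ^ n ≤ (Max.max p q * Max.max p q) ^ n :=
        pow_le_pow_left₀ (mul_nonneg (h0 p) (h0 q))
          (mul_le_mul (le_max_left p q) (le_max_right p q) (h0 q) (h0 _)) n
    _ = Max.max p q ^ (n + n) := by rw [mul_pow, pow_add]
    _ < a := hp.max hq _

theorem powSmall_natCast {a : M} (ha : Nonstd a) (k : ℕ) : PowSmall (k : M) a := fun n => by
  exact_mod_cast ha (k ^ n)

theorem PowSmall.add (h0 : ∀ x : M, 0 ≤ x) {p q a : M} (ha : Nonstd a) (hp : PowSmall p a)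
    (hq : PowSmall q a) : PowSmall (p + q) a := by
  refine ((hp.max hq).mul h0 (powSmall_natCast ha 2)).mono_left h0 ?_
  rw [Nat.cast_ofNat, mul_two]
  exact add_le_add (le_max_left p q) (le_max_right p q)

theorem PowSmall.add_one (h0 : ∀ x : M, 0 ≤ x) {q a : M} (ha : Nonstd a) (hq : PowSmall q a) :
    PowSmall (q + 1) a :=
  hq.add h0 ha (by simpa using powSmall_natCast ha 1)

theorem powSmall_of_pow_lt_mul_self (h0 : ∀ x : M, 0 ≤ x) {c a : M}
    (h : ∀ n : ℕ, c ^ n < a * a) : PowSmall c a := fun n =>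
  lt_of_not_ge fun hn => (h (n + n)).not_ge <| pow_add c n n ▸ mul_le_mul hn hn (h0 a) (h0 _)

theorem E3.symm {a b : M} (h : E3 a b) : E3 b a :=
  let ⟨c, hc, hab, hba⟩ := h
  ⟨c, fun n => (hc n).symm, hba, hab⟩

theorem e3_comm {a b : M} : E3 a b ↔ E3 b a :=
  ⟨E3.symm, E3.symm⟩

theorem E3.lt_mul_self (h0 : ∀ x : M, 0 ≤ x) {a b : M} (h : E3 a b) : a < b * b :=
  let ⟨c, hc, hab, _⟩ := h
  hab.trans_le <| mul_le_mul_of_nonneg_left (by simpa using (hc 1).2.le) (h0 b)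

theorem E3.exists_powSmall_of_lt_mul_self (h0 : ∀ x : M, 0 ≤ x) {x y a : M} (h : E3 x y)
    (hy : y < a * a) : ∃ e, PowSmall e a ∧ x < y * e :=
  let ⟨e, he, hxy, _⟩ := h
  ⟨e, powSmall_of_pow_lt_mul_self h0 fun n => (he n).2.trans hy, hxy⟩

theorem e3_iff_of_le {a b : M} (ha : Nonstd a) (hab : a ≤ b) :
    E3 a b ↔ ∃ c, PowSmall c a ∧ b < a * c := by
  refine ⟨fun ⟨c, hc, _, hbc⟩ => ⟨c, fun n => (hc n).1, hbc⟩, fun ⟨c, hc, hbc⟩ => ?_⟩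
  have hc1 : 1 < c := lt_of_not_ge fun hc1 =>
    (hbc.trans_le (mul_le_of_le_one_right ha.pos.le hc1)).not_ge hab
  exact ⟨c, fun n => ⟨hc n, (hc n).trans_le hab⟩,
    hab.trans_lt (lt_mul_of_one_lt_right (ha.pos.trans_le hab) hc1), hbc⟩

theorem e4_iff_not_powSmall {a b : M} (ha : Nonstd a) (hb : Nonstd b) :
    E4 a b ↔ ¬PowSmall a b ∧ ¬PowSmall b a := by
  refine ⟨fun ⟨n, hab, hba⟩ => ⟨fun h => (h n).asymm hba, fun h => (h n).asymm hab⟩, ?_⟩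
  simp only [PowSmall, not_forall, not_lt]
  rintro ⟨⟨m, hm⟩, ⟨k, hk⟩⟩
  refine ⟨max m k + 1, hk.trans_lt ?_, hm.trans_lt ?_⟩
  · exact pow_lt_pow_right₀ hb.one_lt (Nat.lt_succ_of_le (le_max_right m k))
  · exact pow_lt_pow_right₀ ha.one_lt (Nat.lt_succ_of_le (le_max_left m k))

end Semiring

section TwoSemirings

variable {M₁ M₂ : Type*} [CommSemiring M₁] [LinearOrder M₁] [IsStrictOrderedRing M₁]
  [CommSemiring M₂] [LinearOrder M₂] [IsStrictOrderedRing M₂]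

theorem Nonstd.map (h0₂ : ∀ x : M₂, 0 ≤ x) (hd₂ : ∀ a x : M₂, ¬(a < x ∧ x < a + 1))
    (f : M₁ ≃o M₂) {a : M₁} (ha : Nonstd a) : Nonstd (f a) :=
  nonstd_of_infinite_Iio h0₂ hd₂ (f.image_Iio a ▸ ha.infinite_Iio.image f.injective.injOn)

theorem SegEquiv.mul (hM₁ : IsDiscreteDivSemiring M₁) (hM₂ : IsDiscreteDivSemiring M₂)
    {u v : M₁} {u' v' : M₂} (hu0 : u ≠ 0) (hu0' : u' ≠ 0) (hu : SegEquiv u u')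
    (hv : SegEquiv v v') : SegEquiv (u * v) (u' * v') :=
  let ⟨e⟩ := hu
  let ⟨e'⟩ := hv
  ⟨(hM₁.mulSegOrderIso u v hu0).symm.trans
    ((Prod.Lex.prodLexCongr e' e).trans (hM₂.mulSegOrderIso u' v' hu0'))⟩

theorem SegEquiv.pow (hM₁ : IsDiscreteDivSemiring M₁) (hM₂ : IsDiscreteDivSemiring M₂)
    {u : M₁} {u' : M₂} (hu0 : u ≠ 0) (hu0' : u' ≠ 0) (hu : SegEquiv u u') (n : ℕ) :
    SegEquiv (u ^ n) (u' ^ n) := by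
  induction n with
  | zero => simpa using segEquiv_one hM₁.zero_le hM₁.discrete hM₂.zero_le hM₂.discrete
  | succ n ih => simpa only [pow_succ'] using hu.mul hM₁ hM₂ hu0 hu0' ih

theorem OrderRigid3.e3_symm_apply (hrig : OrderRigid3 M₁) (h0₁ : ∀ x : M₁, 0 ≤ x)
    (hd₁ : ∀ a x : M₁, ¬(a < x ∧ x < a + 1)) (f : M₁ ≃o M₂) {x : M₁} {y : M₂}
    (hx : Nonstd x) (hy : Nonstd y) (h : SegEquiv x y) : E3 x (f.symm y) :=
  hrig x _ hx (hy.map h0₁ hd₁ f.symm) (h.trans (f.symm.segEquiv y))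

variable (hM₁ : IsDiscreteDivSemiring M₁) (hM₂ : IsDiscreteDivSemiring M₂)
  (hrig : OrderRigid3 M₁) (f : M₁ ≃o M₂)
include hM₁ hM₂ hrig

theorem e3_mul_symm_apply {s t : M₁} (hs : Nonstd s) (ht : 0 < t) :
    E3 (s * t) (f.symm (f s * f t)) := by
  have hfs := hs.map hM₂.zero_le hM₂.discrete f
  have hft : 0 < f t := (hM₂.zero_le _).trans_lt (f.lt_iff_lt.mpr ht)
  exact hrig.e3_symm_apply hM₁.zero_le hM₁.discrete f
    (hs.mono (le_mul_of_one_le_right hs.pos.le (one_le_of_pos_of_discrete hM₁.discrete ht)))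
    (hfs.mono (le_mul_of_one_le_right hfs.pos.le (one_le_of_pos_of_discrete hM₂.discrete hft)))
    ((f.segEquiv s).mul hM₁ hM₂ hs.pos.ne' hfs.pos.ne' (f.segEquiv t))

theorem e3_pow_symm_apply {c : M₁} (hc : Nonstd c) {n : ℕ} (hn : n ≠ 0) :
    E3 (c ^ n) (f.symm (f c ^ n)) := by
  have hfc := hc.map hM₂.zero_le hM₂.discrete f
  exact hrig.e3_symm_apply hM₁.zero_le hM₁.discrete f (hc.mono (le_self_pow₀ hc.one_lt.le hn))
    (hfc.mono (le_self_pow₀ hfc.one_lt.le hn))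
    ((f.segEquiv c).pow hM₁ hM₂ hc.pos.ne' hfc.pos.ne' n)

theorem PowSmall.map {c a : M₁} (ha : Nonstd a) (hc : PowSmall c a) : PowSmall (f c) (f a) := by
  have hfa := ha.map hM₂.zero_le hM₂.discrete f
  by_cases hcs : Nonstd c
  · intro n
    rcases eq_or_ne n 0 with rfl | hn
    · simpa using hfa.one_lt
    rw [← f.symm_apply_lt]
    calc f.symm (f c ^ n) < c ^ n * c ^ n :=
          (e3_pow_symm_apply hM₁ hM₂ hrig f hcs hn).symm.lt_mul_self hM₁.zero_le
      _ = c ^ (n + n) := (pow_add c n n).symm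
      _ < a := hc _
  · have hfcs : ¬Nonstd (f c) := fun h => hcs <| by
      simpa using h.map hM₁.zero_le hM₁.discrete f.symm
    obtain ⟨j, hj⟩ := exists_eq_natCast_of_not_nonstd hM₂.zero_le hM₂.discrete hfcs
    exact hj ▸ powSmall_natCast hfa j

theorem PowSmall.of_map {c a : M₁} (ha : Nonstd a) (hc : PowSmall (f c) (f a)) :
    PowSmall c a := by
  by_cases hcs : Nonstd c
  · refine powSmall_of_pow_lt_mul_self hM₁.zero_le fun n => ?_
    have hP : f.symm (f c ^ (n + 1)) < a := f.symm_apply_lt.mpr (hc _)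
    calc c ^ n ≤ c ^ (n + 1) := pow_le_pow_right₀ hcs.one_lt.le n.le_succ
      _ < f.symm (f c ^ (n + 1)) * f.symm (f c ^ (n + 1)) :=
        (e3_pow_symm_apply hM₁ hM₂ hrig f hcs n.succ_ne_zero).lt_mul_self hM₁.zero_le
      _ < a * a := mul_self_lt_mul_self (hM₁.zero_le _) hP
  · obtain ⟨k, rfl⟩ := exists_eq_natCast_of_not_nonstd hM₁.zero_le hM₁.discrete hcs
    exact powSmall_natCast ha k

theorem powSmall_map_iff {c a : M₁} (ha : Nonstd a) : PowSmall (f c) (f a) ↔ PowSmall c a :=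
  ⟨PowSmall.of_map hM₁ hM₂ hrig f ha, PowSmall.map hM₁ hM₂ hrig f ha⟩

theorem exists_powSmall_lt_mul_map {a c x : M₁} (ha : Nonstd a) (hc : PowSmall c a)
    (hx : x < a * c) : ∃ C, PowSmall C (f a) ∧ f x < f a * C := by
  have hfa := ha.map hM₂.zero_le hM₂.discrete f
  obtain ⟨Q, R, hxQR, hR⟩ := hM₂.exists_div (f x) (f a) hfa.pos.ne'
  refine ⟨Q + 1, ?_, by rw [hxQR, mul_add_one]; exact add_lt_add_right hR _⟩
  suffices hQ : PowSmall (f.symm Q) a by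
    simpa using (hQ.map hM₁ hM₂ hrig f ha).add_one hM₂.zero_le hfa
  rcases (hM₁.zero_le (f.symm Q)).eq_or_lt with ht | ht
  · exact ht ▸ hc.mono_left hM₁.zero_le (hM₁.zero_le c)
  have hy : f.symm (f a * Q) ≤ x :=
    f.symm_apply_le.mpr (hxQR ▸ le_add_of_nonneg_right (hM₂.zero_le R))
  have h := e3_mul_symm_apply hM₁ hM₂ hrig f ha ht
  rw [f.apply_symm_apply] at h
  -- `Q` is compared with `c` through `a * f⁻¹ Q  E³  f⁻¹ (f a * Q) ≤ x < a * c`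
  obtain ⟨e, he, hlt⟩ := h.exists_powSmall_of_lt_mul_self hM₁.zero_le
    (hy.trans_lt (hx.trans (mul_lt_mul_of_pos_left hc.lt ha.pos)))
  refine (hc.mul hM₁.zero_le he).mono_left hM₁.zero_le
    (lt_of_mul_lt_mul_left ?_ (hM₁.zero_le a)).le
  calc a * f.symm Q < f.symm (f a * Q) * e := hlt
    _ ≤ a * c * e := mul_le_mul_of_nonneg_right (hy.trans hx.le) (hM₁.zero_le e)
    _ = a * (c * e) := mul_assoc a c e

theorem exists_powSmall_lt_mul_of_map {a x : M₁} {C : M₂} (ha : Nonstd a)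
    (hC : PowSmall C (f a)) (hx : f x < f a * C) : ∃ c, PowSmall c a ∧ x < a * c := by
  obtain ⟨q, r, rfl, hr⟩ := hM₁.exists_div x a ha.pos.ne'
  refine ⟨q + 1, ?_, by rw [mul_add_one]; exact add_lt_add_right hr _⟩
  refine PowSmall.add_one hM₁.zero_le ha ?_
  have hCt : f (f.symm C) = C := f.apply_symm_apply C
  have ht : PowSmall (f.symm C) a := (powSmall_map_iff hM₁ hM₂ hrig f ha).mp (by rwa [hCt])
  have hC0 : 0 < C := pos_of_mul_pos_right ((hM₂.zero_le _).trans_lt hx) (hM₂.zero_le _)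
  have h := e3_mul_symm_apply hM₁ hM₂ hrig f ha
    ((hM₁.zero_le _).trans_lt (f.symm.lt_iff_lt.mpr hC0))
  rw [hCt] at h
  obtain ⟨e, he, hlt⟩ := h.symm.exists_powSmall_of_lt_mul_self hM₁.zero_le
    (mul_lt_mul_of_pos_left ht.lt ha.pos)
  refine (ht.mul hM₁.zero_le he).mono_left hM₁.zero_le
    (lt_of_mul_lt_mul_left ?_ (hM₁.zero_le a)).le
  calc a * q ≤ a * q + r := le_add_of_nonneg_right (hM₁.zero_le r)
    _ < f.symm (f a * C) := f.lt_symm_apply.mpr hx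
    _ < a * f.symm C * e := hlt
    _ = a * (f.symm C * e) := mul_assoc _ _ _

theorem e3_map_iff_of_le {a b : M₁} (ha : Nonstd a) (hab : a ≤ b) :
    E3 (f a) (f b) ↔ E3 a b := by
  rw [e3_iff_of_le ha hab,
    e3_iff_of_le (ha.map hM₂.zero_le hM₂.discrete f) (f.monotone hab)]
  exact ⟨fun ⟨_, hC, hb⟩ => exists_powSmall_lt_mul_of_map hM₁ hM₂ hrig f ha hC hb,
    fun ⟨_, hc, hb⟩ => exists_powSmall_lt_mul_map hM₁ hM₂ hrig f ha hc hb⟩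

end TwoSemirings

theorem threeOR_orderIso_maps_E3_E4_general {M₁ M₂ : Type*}
    [CommSemiring M₁] [LinearOrder M₁] [IsStrictOrderedRing M₁] [CommSemiring M₂] [LinearOrder M₂] [IsStrictOrderedRing M₂]
    (h0₁ : ∀ x : M₁, 0 ≤ x) (h0₂ : ∀ x : M₂, 0 ≤ x)
    (hd₁ : ∀ a x : M₁, ¬(a < x ∧ x < a + 1)) (hd₂ : ∀ a x : M₂, ¬(a < x ∧ x < a + 1))
    (hdiv₁ : ∀ a b : M₁, b ≠ 0 → ∃ q r : M₁, a = b * q + r ∧ r < b)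
    (hdiv₂ : ∀ a b : M₂, b ≠ 0 → ∃ q r : M₂, a = b * q + r ∧ r < b)
    (hrig : OrderRigid3 M₁)
    (f : M₁ ≃o M₂) (a b : M₁) (ha : Nonstd a) (hb : Nonstd b) :
    (E3 a b ↔ E3 (f a) (f b)) ∧ (E4 a b ↔ E4 (f a) (f b)) := by
  have hM₁ : IsDiscreteDivSemiring M₁ := ⟨h0₁, hd₁, hdiv₁⟩
  have hM₂ : IsDiscreteDivSemiring M₂ := ⟨h0₂, hd₂, hdiv₂⟩
  refine ⟨?_, ?_⟩
  · rcases le_total a b with hab | hba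
    · exact (e3_map_iff_of_le hM₁ hM₂ hrig f ha hab).symm
    · exact e3_comm.trans ((e3_map_iff_of_le hM₁ hM₂ hrig f hb hba).symm.trans e3_comm)
  · rw [e4_iff_not_powSmall ha hb,
      e4_iff_not_powSmall (ha.map h0₂ hd₂ f) (hb.map h0₂ hd₂ f),
      powSmall_map_iff hM₁ hM₂ hrig f hb, powSmall_map_iff hM₁ hM₂ hrig f ha]

/-- if `M₁` is 3-order-rigid, an order isomorphism `f : M₁ ≃o M₂`
maps `E³` onto `E³` and `E⁴` onto `E⁴`. -/
theorem threeOR_orderIso_maps_E3_E4 {M₁ M₂ : Type*}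
    [CommSemiring M₁] [LinearOrder M₁] [IsStrictOrderedRing M₁] [CommSemiring M₂] [LinearOrder M₂] [IsStrictOrderedRing M₂]
    (h0₁ : ∀ x : M₁, 0 ≤ x) (h0₂ : ∀ x : M₂, 0 ≤ x)
    (hd₁ : ∀ a x : M₁, ¬(a < x ∧ x < a + 1)) (hd₂ : ∀ a x : M₂, ¬(a < x ∧ x < a + 1))
    (hsub₁ : ∀ a b : M₁, a ≤ b → ∃ c, b = a + c)
    (hsub₂ : ∀ a b : M₂, a ≤ b → ∃ c, b = a + c)
    (hdiv₁ : ∀ a b : M₁, b ≠ 0 → ∃ q r : M₁, a = b * q + r ∧ r < b)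
    (hdiv₂ : ∀ a b : M₂, b ≠ 0 → ∃ q r : M₂, a = b * q + r ∧ r < b)
    (hrig : OrderRigid3 M₁)
    (f : M₁ ≃o M₂) (a b : M₁) (ha : Nonstd a) (hb : Nonstd b) :
    (E3 a b ↔ E3 (f a) (f b)) ∧ (E4 a b ↔ E4 (f a) (f b)) :=
  threeOR_orderIso_maps_E3_E4_general h0₁ h0₂ hd₁ hd₂ hdiv₁ hdiv₂ hrig f a b ha hb
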